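/- arXiv:2205.09561 — 2 statements merged into one kernel-verified Lean document; each statement's English description precedes it below -/
import Mathlib

section
/- Let X be a separable infinite-dimensional real Hilbert space with orthonormal basis (eₙ)_{n≥1}, let ηₙ, μₙ ∈ (0,1) satisfy ηₙ² + μₙ² = 1 for all n ≥ 1 with (ηₙ) ∈ ℓ², set zₙ := ηₙ e_{2n−1} − μₙ e_{2n}, c* := Σ_{n≥1} ηₙ e_{2n}, P := {Σ_{n≥1} λₙ zₙ : (λₙ) ∈ ℓ², λₙ ≥ 0 for all n}, L := the closed linear span of {e_{2n−1} : n ≥ 1}, A := the orthogonal projection onto L (viewed as a map X → Y := X), and v(y) := inf{⟨x, c*⟩ : x ∈ P, Ax = y}. Then the dual feasible set {y* ∈ Y : c* − A y* ∈ P⁺} is empty (here A* = A), so v** ≡ −∞ and the lower semicontinuous envelope of v equals −∞ at every point of dom v; consequently v, though proper, is not lower semicontinuous at any y ∈ dom v, and ∂v(b) = ∅ for every b ∈ Y. -/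
/-!
Here `b (2 * n)` and `b (2 * n + 1)` play the roles of `e₂ₙ₋₁` and `e₂ₙ`, so `A zₙ = ηₙ b (2n)`
and `⟨zₙ, c*⟩ = -μₙηₙ`.

A point `x = ∑ λₙ zₙ` of `P` is recovered from `A x` through `⟨b (2n), A x⟩ = λₙηₙ`, so every
`y ∈ dom v` has a single feasible preimage and `v` is proper. Adding `(c/ηₙ) zₙ` for `k` indices
with `μₙ ≥ 1/2` moves `A x` by `c ∑ b (2n)`, of norm `c√k`, and lowers the value by at least
`ck/2`; taking `c = 2M/k` lowers it by `M` within distance `2M/√k`. Hence `v` takes arbitrarily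
negative values near each point of its domain, which rules out lower semicontinuity (and with it
every subgradient, whose affine minorant would force it) and makes the lsc envelope `-∞`.
Finally `ηₙ → 0` forces `μₙ → 1` while `⟨b (2n), y*⟩ → 0` by Bessel, so for each `y*` some `n`
has `⟨b (2n), y*⟩ + μₙ > 0`: then `⟨zₙ, c* − A y*⟩ < 0`, and along the ray `t zₙ` the
conjugate `v*(y*)` is `+∞`.
-/

open Filter Topology

section LowerSemicontinuity

variable {α : Type*} [TopologicalSpace α] {f : α → EReal} {a : α}

theorem lowerSemicontinuousAt_of_continuousAt_le {g : α → ℝ} (hg : ContinuousAt g a)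
    (hgf : ∀ x, (g x : EReal) ≤ f x) (hga : (g a : EReal) = f a) : LowerSemicontinuousAt f a :=
  fun _ hy => ((continuous_coe_real_ereal.continuousAt.comp hg).eventually
    (lt_mem_nhds (show _ < (g a : EReal) from hga ▸ hy))).mono fun x hx => hx.trans_le (hgf x)

theorem not_lowerSemicontinuousAt_of_frequently_le (ha : f a ≠ ⊥)
    (h : ∀ t : ℝ, ∃ᶠ x in 𝓝 a, f x ≤ t) : ¬ LowerSemicontinuousAt f a := by
  intro hf
  obtain ⟨t, -, ht⟩ := EReal.exists_between_coe_real (Ne.bot_lt ha)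
  obtain ⟨x, hxt, htx⟩ := ((h t).and_eventually (hf t ht)).exists
  exact (hxt.trans_lt htx).false

theorem iInf_mem_closure_epigraph_eq_bot (h : ∀ t : ℝ, ∃ᶠ x in 𝓝 a, f x ≤ t) :
    (⨅ (t : ℝ) (_ : (a, t) ∈ closure {p : α × ℝ | f p.1 ≤ p.2}), (t : EReal)) = ⊥ := by
  have hmem (t : ℝ) : (a, t) ∈ closure {p : α × ℝ | f p.1 ≤ p.2} :=
    mem_closure_iff_frequently.2 <|
      ((continuous_id.prodMk continuous_const).tendsto a).frequently (h t)
  refine (EReal.eq_bot_iff_forall_lt _).2 fun t => ?_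
  exact (iInf₂_le (t - 1) (hmem (t - 1))).trans_lt (by exact_mod_cast sub_one_lt t)

end LowerSemicontinuity

section ValueFunction

variable {X Y : Type*} [NormedAddCommGroup X] [InnerProductSpace ℝ X]
  {P : Set X} {A : X → Y} {c x : X} {y : Y}

noncomputable def valueFunction (P : Set X) (A : X → Y) (c : X) (y : Y) : EReal :=
  ⨅ (x : X) (_ : x ∈ P ∧ A x = y), ((inner ℝ x c : ℝ) : EReal)

theorem valueFunction_le (hx : x ∈ P) : valueFunction P A c (A x) ≤ (inner ℝ x c : ℝ) :=
  iInf₂_le x ⟨hx, rfl⟩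

theorem exists_mem_of_valueFunction_lt_top (h : valueFunction P A c y < ⊤) :
    ∃ x ∈ P, A x = y := by
  by_contra! hP
  refine h.ne (iInf₂_eq_top.2 fun x hx => ?_)
  exact absurd hx.2 (hP x hx.1)

theorem valueFunction_apply_of_injOn (hA : Set.InjOn A P) (hx : x ∈ P) :
    valueFunction P A c (A x) = (inner ℝ x c : ℝ) :=
  (valueFunction_le hx).antisymm <| le_iInf₂ fun x' hx' => by rw [hA hx'.1 hx hx'.2]

theorem valueFunction_ne_bot (hA : Set.InjOn A P) (y : Y) : valueFunction P A c y ≠ ⊥ := by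
  obtain h | h := (le_top : valueFunction P A c y ≤ ⊤).eq_or_lt
  · exact h ▸ top_ne_bot
  · obtain ⟨x, hx, rfl⟩ := exists_mem_of_valueFunction_lt_top h
    exact valueFunction_apply_of_injOn hA hx ▸ EReal.coe_ne_bot _

end ValueFunction

section Cone

variable {X ι : Type*} [NormedAddCommGroup X] [InnerProductSpace ℝ X] {z : ι → X}

def nonnegL2Cone (z : ι → X) : Set X :=
  {x | ∃ l : ι → ℝ, (∀ n, 0 ≤ l n) ∧ Summable (fun n => l n ^ 2) ∧ HasSum (fun n => l n • z n) x}

namespace nonnegL2Cone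

theorem zero_mem : (0 : X) ∈ nonnegL2Cone z :=
  ⟨0, fun _ => le_rfl, by simp [summable_zero], by simp [hasSum_zero]⟩

theorem add_mem {x x' : X} (hx : x ∈ nonnegL2Cone z) (hx' : x' ∈ nonnegL2Cone z) :
    x + x' ∈ nonnegL2Cone z := by
  obtain ⟨l, hl, hl2, hlx⟩ := hx
  obtain ⟨l', hl', hl2', hlx'⟩ := hx'
  refine ⟨l + l', fun n => add_nonneg (hl n) (hl' n), ?_, by simpa [add_smul] using hlx.add hlx'⟩
  -- `(a + b)² ≤ 2a² + 2b²`
  refine ((hl2.mul_left 2).add (hl2'.mul_left 2)).of_nonneg_of_le (fun n => sq_nonneg _)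
    fun n => ?_
  simp only [Pi.add_apply]
  nlinarith [sq_nonneg (l n - l' n)]

theorem smul_mem [DecidableEq ι] {t : ℝ} (ht : 0 ≤ t) (n : ι) : t • z n ∈ nonnegL2Cone z := by
  refine ⟨Pi.single n t, fun k => ?_, ?_, ?_⟩
  · by_cases h : k = n <;> simp [h, ht]
  · exact (hasSum_single n fun k hk => by simp [hk]).summable
  · simpa using hasSum_single (f := fun k => (Pi.single n t : ι → ℝ) k • z k) n
      fun k hk => by simp [hk]

theorem add_sum_smul_mem {x : X} (hx : x ∈ nonnegL2Cone z) (F : Finset ι) {s : ι → ℝ}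
    (hs : ∀ n, 0 ≤ s n) : x + ∑ n ∈ F, s n • z n ∈ nonnegL2Cone z := by
  classical
  exact add_mem hx (Finset.sum_induction _ (· ∈ nonnegL2Cone z) (fun _ _ => add_mem) zero_mem
    fun n _ => smul_mem (hs n) n)

end nonnegL2Cone

end Cone

section Orthonormal

variable {X ι : Type*} [NormedAddCommGroup X] [InnerProductSpace ℝ X] {v : ι → X}

theorem Orthonormal.tendsto_inner_cofinite_zero (hv : Orthonormal ℝ v) (x : X) :
    Tendsto (fun i => inner ℝ (v i) x) cofinite (𝓝 0) := by
  rw [tendsto_zero_iff_norm_tendsto_zero]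
  simpa [Real.sqrt_sq_eq_abs] using
    (hv.inner_products_summable x).tendsto_cofinite_zero.sqrt

theorem Orthonormal.norm_smul_sum_sq (hv : Orthonormal ℝ v) (c : ℝ) (s : Finset ι) :
    ‖c • ∑ i ∈ s, v i‖ ^ 2 = c ^ 2 * s.card := by
  rw [← real_inner_self_eq_norm_sq, Finset.smul_sum, hv.inner_sum]
  simp [sq, mul_comm]

theorem HasSum.inner_eq_of_inner_eq_ite [DecidableEq ι] {w : ι → X} {l : ι → ℝ} {x u : X}
    (hx : HasSum (fun k => l k • w k) x) {n : ι} {a : ℝ}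
    (hw : ∀ k, inner ℝ u (w k) = if k = n then a else 0) : inner ℝ u x = l n * a := by
  have hterm : (fun k => innerSL ℝ u (l k • w k)) = fun k => if k = n then l n * a else 0 := by
    ext k
    by_cases hk : k = n <;> simp [hw, hk]
  exact (hx.mapL (innerSL ℝ u)).unique (hterm ▸ hasSum_ite_eq n (l n * a))

end Orthonormal

section Example

variable {X : Type*} [NormedAddCommGroup X] [InnerProductSpace ℝ X]
  {b : ℕ → X} {η μ : ℕ → ℝ} {z : ℕ → X}

theorem inner_even_z (hb : Orthonormal ℝ b)
    (hz : ∀ n, z n = η n • b (2 * n) - μ n • b (2 * n + 1)) (n k : ℕ) :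
    inner ℝ (b (2 * n)) (z k) = if k = n then η n else 0 := by
  rw [hz, inner_sub_right, real_inner_smul_right, real_inner_smul_right,
    orthonormal_iff_ite.1 hb, orthonormal_iff_ite.1 hb]
  by_cases hk : k = n
  · simp [hk]
  · simp [hk, show 2 * n ≠ 2 * k by omega, show 2 * n ≠ 2 * k + 1 by omega]

theorem inner_z_odd (hb : Orthonormal ℝ b)
    (hz : ∀ n, z n = η n • b (2 * n) - μ n • b (2 * n + 1)) (n k : ℕ) :
    inner ℝ (z n) (b (2 * k + 1)) = if k = n then -μ n else 0 := by
  rw [hz, inner_sub_left, real_inner_smul_left, real_inner_smul_left,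
    orthonormal_iff_ite.1 hb, orthonormal_iff_ite.1 hb]
  by_cases hk : k = n
  · simp [hk]
  · simp [hk, Ne.symm hk, show 2 * n ≠ 2 * k + 1 by omega]

theorem inner_z_cstar (hb : Orthonormal ℝ b)
    (hz : ∀ n, z n = η n • b (2 * n) - μ n • b (2 * n + 1)) {cstar : X}
    (hcstar : HasSum (fun n => η n • b (2 * n + 1)) cstar) (n : ℕ) :
    inner ℝ (z n) cstar = -(μ n * η n) := by
  rw [hcstar.inner_eq_of_inner_eq_ite (inner_z_odd hb hz n)]
  ring

theorem inner_even_of_hasSum (hb : Orthonormal ℝ b)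
    (hz : ∀ n, z n = η n • b (2 * n) - μ n • b (2 * n + 1)) {l : ℕ → ℝ} {x : X}
    (hx : HasSum (fun k => l k • z k) x) (n : ℕ) : inner ℝ (b (2 * n)) x = l n * η n :=
  hx.inner_eq_of_inner_eq_ite (inner_even_z hb hz n)

theorem tendsto_one_of_sq_add_sq_eq_one (hμ : ∀ n, 0 ≤ μ n) (hημ : ∀ n, η n ^ 2 + μ n ^ 2 = 1)
    (hη2 : Summable fun n => η n ^ 2) : Tendsto μ atTop (𝓝 1) := by
  rw [tendsto_iff_dist_tendsto_zero]
  refine squeeze_zero (fun _ => dist_nonneg) (fun n => ?_) hη2.tendsto_atTop_zero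
  -- `η² = (1 - μ)(1 + μ)` with `1 + μ ≥ 1`
  rw [Real.dist_eq, abs_le]
  constructor <;> nlinarith [hμ n, hημ n, sq_nonneg (η n)]

theorem exists_inner_even_add_pos (hb : Orthonormal ℝ b) (hμ : Tendsto μ atTop (𝓝 1)) (w : X) :
    ∃ n, 0 < inner ℝ (b (2 * n)) w + μ n := by
  have h0 : Tendsto (fun n => inner ℝ (b (2 * n)) w) atTop (𝓝 0) :=
    (Nat.cofinite_eq_atTop ▸ hb.tendsto_inner_cofinite_zero w).comp
      (tendsto_id.const_mul_atTop' two_pos)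
  exact ((h0.add hμ).eventually (lt_mem_nhds (by norm_num))).exists

theorem odd_mem_orthogonal_closure_span_even (hb : Orthonormal ℝ b) (n : ℕ) :
    b (2 * n + 1) ∈ (Submodule.span ℝ (Set.range fun k => b (2 * k))).topologicalClosureᗮ := by
  rw [Submodule.orthogonal_closure, Submodule.mem_orthogonal]
  refine fun u hu => Submodule.mem_orthogonal_singleton_iff_inner_left.1 <|
    Submodule.span_le.2 ?_ hu
  rintro _ ⟨k, rfl⟩
  rw [SetLike.mem_coe, Submodule.mem_orthogonal_singleton_iff_inner_left,
    orthonormal_iff_ite.1 hb, if_neg (by omega)]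

variable {L : Submodule ℝ X} [L.HasOrthogonalProjection]

theorem starProjection_z (hz : ∀ n, z n = η n • b (2 * n) - μ n • b (2 * n + 1))
    (hbL : ∀ n, b (2 * n) ∈ L) (hbL' : ∀ n, b (2 * n + 1) ∈ Lᗮ) (n : ℕ) :
    L.starProjection (z n) = η n • b (2 * n) := by
  rw [hz, map_sub, map_smul, map_smul, Submodule.starProjection_eq_self_iff.2 (hbL n),
    (L.starProjection_apply_eq_zero_iff).2 (hbL' n), smul_zero, sub_zero]

theorem inner_starProjection_of_mem {u : X} (hu : u ∈ L) (x : X) :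
    inner ℝ u (L.starProjection x) = inner ℝ u x := by
  rw [← Submodule.inner_starProjection_left_eq_right, Submodule.starProjection_eq_self_iff.2 hu]

theorem injOn_starProjection_nonnegL2Cone (hb : Orthonormal ℝ b)
    (hz : ∀ n, z n = η n • b (2 * n) - μ n • b (2 * n + 1)) (hη : ∀ n, 0 < η n)
    (hbL : ∀ n, b (2 * n) ∈ L) : Set.InjOn L.starProjection (nonnegL2Cone z) := by
  rintro x ⟨l, -, -, hlx⟩ x' ⟨l', -, -, hlx'⟩ hxx'
  obtain rfl : l = l' := funext fun n => mul_right_cancel₀ (hη n).ne' <| by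
    rw [← inner_even_of_hasSum hb hz hlx, ← inner_even_of_hasSum hb hz hlx',
      ← inner_starProjection_of_mem (hbL n), hxx', inner_starProjection_of_mem (hbL n)]
  exact hlx.unique hlx'

theorem valueFunction_starProjection_add_smul_sum_le (hb : Orthonormal ℝ b)
    (hz : ∀ n, z n = η n • b (2 * n) - μ n • b (2 * n + 1)) (hη : ∀ n, 0 < η n) {cstar : X}
    (hcstar : HasSum (fun n => η n • b (2 * n + 1)) cstar)
    (hbL : ∀ n, b (2 * n) ∈ L) (hbL' : ∀ n, b (2 * n + 1) ∈ Lᗮ)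
    {x₀ : X} (hx₀ : x₀ ∈ nonnegL2Cone z) (F : Finset ℕ) {c : ℝ} (hc : 0 ≤ c) :
    valueFunction (nonnegL2Cone z) L.starProjection cstar
        (L.starProjection x₀ + c • ∑ n ∈ F, b (2 * n)) ≤
      ((inner ℝ x₀ cstar - c * ∑ n ∈ F, μ n : ℝ) : EReal) := by
  -- the feasible point `x₀ + ∑ (c / ηₙ) zₙ` is projected onto the point in question
  have hx := nonnegL2Cone.add_sum_smul_mem hx₀ F fun n => div_nonneg hc (hη n).le
  convert valueFunction_le (A := L.starProjection) (c := cstar) hx using 2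
  · simp [map_sum, starProjection_z hz hbL hbL', smul_smul, div_mul_cancel₀ _ (hη _).ne',
      Finset.smul_sum]
  · rw [inner_add_left, sum_inner, sub_eq_add_neg, Finset.mul_sum, ← Finset.sum_neg_distrib]
    refine congrArg _ (Finset.sum_congr rfl fun n _ => ?_)
    rw [real_inner_smul_left, inner_z_cstar hb hz hcstar]
    field_simp [(hη n).ne']

theorem frequently_valueFunction_le (hb : Orthonormal ℝ b)
    (hz : ∀ n, z n = η n • b (2 * n) - μ n • b (2 * n + 1)) (hη : ∀ n, 0 < η n)
    (hμ : Tendsto μ atTop (𝓝 1)) {cstar : X}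
    (hcstar : HasSum (fun n => η n • b (2 * n + 1)) cstar)
    (hbL : ∀ n, b (2 * n) ∈ L) (hbL' : ∀ n, b (2 * n + 1) ∈ Lᗮ)
    {x₀ : X} (hx₀ : x₀ ∈ nonnegL2Cone z) (t : ℝ) :
    ∃ᶠ y in 𝓝 (L.starProjection x₀),
      valueFunction (nonnegL2Cone z) L.starProjection cstar y ≤ t := by
  obtain ⟨N, hN⟩ := eventually_atTop.1 (hμ.eventually (le_mem_nhds (by norm_num : (1 : ℝ) / 2 < 1)))
  set M := max (inner ℝ x₀ cstar - t) 0
  refine Metric.nhds_basis_ball.frequently_iff.2 fun δ hδ => ?_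
  obtain ⟨k, hk⟩ := exists_nat_gt ((2 * M / δ) ^ 2)
  have hk0 : (0 : ℝ) < k := lt_of_le_of_lt (by positivity) hk
  -- `k` orthonormal steps of length `2M / k`: the value drops by `≥ M`, the point moves by `2M/√k`
  set c := 2 * M / k
  have hck : c * k = 2 * M := div_mul_cancel₀ _ hk0.ne'
  set F := Finset.Ico N (N + k)
  refine ⟨L.starProjection x₀ + c • ∑ n ∈ F, b (2 * n), ?_, ?_⟩
  · have horth : Orthonormal ℝ fun n => b (2 * n) := hb.comp _ fun _ _ h => by omega
    rw [Metric.mem_ball, dist_eq_norm, add_sub_cancel_left]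
    refine lt_of_pow_lt_pow_left₀ 2 hδ.le ?_
    rw [horth.norm_smul_sum_sq, Nat.card_Ico, add_tsub_cancel_left,
      show c ^ 2 * k = (c * k) ^ 2 / k by field_simp, hck, div_lt_iff₀ hk0,
      ← div_lt_iff₀' (by positivity), ← div_pow]
    exact hk
  · refine (valueFunction_starProjection_add_smul_sum_le hb hz hη hcstar hbL hbL' hx₀ F
      (by positivity)).trans ?_
    have hsum : (k : ℝ) * (1 / 2) ≤ ∑ n ∈ F, μ n := by
      simpa [F] using Finset.card_nsmul_le_sum F μ (1 / 2) fun n hn => hN n (Finset.mem_Ico.1 hn).1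
    have hM : M ≤ c * ∑ n ∈ F, μ n :=
      calc M = c * (k * (1 / 2)) := by linear_combination -hck / 2
        _ ≤ _ := mul_le_mul_of_nonneg_left hsum (by positivity)
    exact_mod_cast (by linarith [le_max_left (inner ℝ x₀ cstar - t) 0])

theorem iSup_inner_sub_valueFunction_eq_top (hb : Orthonormal ℝ b)
    (hz : ∀ n, z n = η n • b (2 * n) - μ n • b (2 * n + 1)) (hη : ∀ n, 0 < η n)
    (hμ : Tendsto μ atTop (𝓝 1)) {cstar : X}
    (hcstar : HasSum (fun n => η n • b (2 * n + 1)) cstar)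
    (hbL : ∀ n, b (2 * n) ∈ L) (hbL' : ∀ n, b (2 * n + 1) ∈ Lᗮ) (ys : X) :
    ⨆ y, ((inner ℝ y ys : ℝ) : EReal) - valueFunction (nonnegL2Cone z) L.starProjection cstar y
      = ⊤ := by
  obtain ⟨n, hn⟩ := exists_inner_even_add_pos hb hμ ys
  refine (EReal.eq_top_iff_forall_lt _).2 fun M => ?_
  -- along the ray `c • b (2n)` the objective gains `c (⟪b (2n), ys⟫ + μₙ)`
  set c := (|M| + 1) / (inner ℝ (b (2 * n)) ys + μ n)
  have hv := valueFunction_starProjection_add_smul_sum_le hb hz hη hcstar hbL hbL'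
    nonnegL2Cone.zero_mem {n} (by positivity : 0 ≤ c)
  simp only [map_zero, zero_add, Finset.sum_singleton, inner_zero_left] at hv
  refine lt_of_lt_of_le ?_ (le_iSup _ (c • b (2 * n)))
  calc (M : EReal) < ((inner ℝ (c • b (2 * n)) ys - (0 - c * μ n) : ℝ) : EReal) := by
        have : c * (inner ℝ (b (2 * n)) ys + μ n) = |M| + 1 := div_mul_cancel₀ _ hn.ne'
        rw [real_inner_smul_left]
        exact_mod_cast (by linarith [le_abs_self M])
    _ ≤ _ := by rw [EReal.coe_sub]; exact EReal.sub_le_sub le_rfl hv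

theorem exists_mem_nonnegL2Cone_inner_neg (hb : Orthonormal ℝ b)
    (hz : ∀ n, z n = η n • b (2 * n) - μ n • b (2 * n + 1)) (hη : ∀ n, 0 < η n)
    (hμ : Tendsto μ atTop (𝓝 1)) {cstar : X}
    (hcstar : HasSum (fun n => η n • b (2 * n + 1)) cstar)
    (hbL : ∀ n, b (2 * n) ∈ L) (hbL' : ∀ n, b (2 * n + 1) ∈ Lᗮ) (ys : X) :
    ∃ p ∈ nonnegL2Cone z, inner ℝ p (cstar - L.starProjection ys) < 0 := by
  obtain ⟨n, hn⟩ := exists_inner_even_add_pos hb hμ ys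
  refine ⟨z n, by simpa using nonnegL2Cone.smul_mem zero_le_one n, ?_⟩
  rw [inner_sub_right, inner_z_cstar hb hz hcstar, ← Submodule.inner_starProjection_left_eq_right,
    starProjection_z hz hbL hbL', real_inner_smul_left]
  nlinarith [hη n]

end Example

/-- In the setting of the Hilbert-space example (same data as in
Statement 11), the dual feasible set `{y* : c* − A y* ∈ P⁺}` is empty (here `A* = A`),
so `v** ≡ −∞` and the lower semicontinuous envelope of `v` (defined through the closure
of the epigraph) equals `−∞` at every point of `dom v`; consequently `v`, though
proper, is lower semicontinuous at no point of `dom v`, and `∂v(b) = ∅` for all `b`. -/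
theorem stmt12 {X : Type*} [NormedAddCommGroup X] [InnerProductSpace ℝ X]
    [CompleteSpace X]
    (b : HilbertBasis ℕ ℝ X)
    (η μ : ℕ → ℝ) (hη : ∀ n, η n ∈ Set.Ioo (0 : ℝ) 1) (hμ : ∀ n, μ n ∈ Set.Ioo (0 : ℝ) 1)
    (hημ : ∀ n, η n ^ 2 + μ n ^ 2 = 1) (hη2 : Summable (fun n => η n ^ 2))
    (z : ℕ → X) (hz : ∀ n, z n = η n • b (2 * n) - μ n • b (2 * n + 1))
    (cstar : X) (hc : HasSum (fun n => η n • b (2 * n + 1)) cstar)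
    (P : Set X)
    (hP : P = {x : X | ∃ l : ℕ → ℝ, (∀ n, 0 ≤ l n) ∧ Summable (fun n => l n ^ 2) ∧
      HasSum (fun n => l n • z n) x})
    (L : Submodule ℝ X)
    (hL : L = (Submodule.span ℝ (Set.range fun n => b (2 * n))).topologicalClosure)
    (A : X → X)
    (hA : ∀ x : X, A x ∈ L ∧ ∀ u ∈ L, (inner ℝ (x - A x) u : ℝ) = 0)
    (v : X → EReal)
    (hv : ∀ y : X, v y = ⨅ (x : X) (_ : x ∈ P ∧ A x = y), ((inner ℝ x cstar : ℝ) : EReal)) :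
    ({ys : X | ∀ p ∈ P, 0 ≤ (inner ℝ p (cstar - A ys) : ℝ)} = ∅) ∧
    (∀ y : X,
      (⨆ ys : X, ((inner ℝ y ys : ℝ) : EReal)
        - (⨆ y' : X, ((inner ℝ y' ys : ℝ) : EReal) - v y')) = ⊥) ∧
    (∀ y : X, v y < ⊤ →
      (⨅ (t : ℝ) (_ : (y, t) ∈ closure {p : X × ℝ | v p.1 ≤ (p.2 : EReal)}),
        (t : EReal)) = ⊥) ∧
    ((∀ y : X, v y ≠ ⊥) ∧ (∃ y : X, v y ≠ ⊤)) ∧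
    (∀ y : X, v y < ⊤ → ¬ LowerSemicontinuousAt v y) ∧
    (∀ bb : X, {ys : X | ∃ r : ℝ, v bb = (r : EReal) ∧
      ∀ y : X, (((inner ℝ (y - bb) ys : ℝ) + r : ℝ) : EReal) ≤ v y} = ∅) := by
  have hb := b.orthonormal
  have hη0 n : 0 < η n := (hη n).1
  have hμ1 := tendsto_one_of_sq_add_sq_eq_one (fun n => (hμ n).1.le) hημ hη2
  have : L.HasOrthogonalProjection := hL ▸ inferInstance
  have hbL n : b (2 * n) ∈ L :=
    hL ▸ Submodule.le_topologicalClosure _ (Submodule.subset_span ⟨n, rfl⟩)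
  have hbL' n : b (2 * n + 1) ∈ Lᗮ := hL ▸ odd_mem_orthogonal_closure_span_even hb n
  obtain rfl : A = L.starProjection := funext fun x =>
    (Submodule.eq_starProjection_of_mem_of_inner_eq_zero (hA x).1 (hA x).2).symm
  obtain rfl : P = nonnegL2Cone z := hP
  obtain rfl : v = valueFunction (nonnegL2Cone z) L.starProjection cstar := funext hv
  set v := valueFunction (nonnegL2Cone z) L.starProjection cstar
  have hinj := injOn_starProjection_nonnegL2Cone hb hz hη0 hbL
  have hfreq (y : X) (hy : v y < ⊤) (t : ℝ) : ∃ᶠ y' in 𝓝 y, v y' ≤ t := by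
    obtain ⟨x₀, hx₀, rfl⟩ := exists_mem_of_valueFunction_lt_top hy
    exact frequently_valueFunction_le hb hz hη0 hμ1 hc hbL hbL' hx₀ t
  have hnlsc (y : X) (hy : v y < ⊤) : ¬ LowerSemicontinuousAt v y :=
    not_lowerSemicontinuousAt_of_frequently_le (valueFunction_ne_bot hinj y) (hfreq y hy)
  refine ⟨?_, fun y => ?_, fun y hy => iInf_mem_closure_epigraph_eq_bot (hfreq y hy),
    ⟨valueFunction_ne_bot hinj, ⟨_, ((valueFunction_le nonnegL2Cone.zero_mem).trans_lt
      (EReal.coe_lt_top _)).ne⟩⟩, hnlsc, fun bb => ?_⟩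
  · refine Set.eq_empty_iff_forall_notMem.2 fun ys hys => ?_
    obtain ⟨p, hp, hneg⟩ := exists_mem_nonnegL2Cone_inner_neg hb hz hη0 hμ1 hc hbL hbL' ys
    exact (hys p hp).not_gt hneg
  · simp [v, iSup_inner_sub_valueFunction_eq_top hb hz hη0 hμ1 hc hbL hbL', EReal.sub_top]
  · refine Set.eq_empty_iff_forall_notMem.2 fun ys ⟨r, hr, hle⟩ => hnlsc bb
      (hr ▸ EReal.coe_lt_top r) (lowerSemicontinuousAt_of_continuousAt_le ?_ hle (by simp [hr]))
    fun_prop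
end

section
/- In Kretschmer's setting with α > 0: for every y ∈ dom v and every ρ > 0, the value function v is not bounded above on B(y, ρ) ∩ dom v, and B(y, ρ) contains points outside dom v; consequently the interior of dom v in L²[0,1] is empty, and the restriction of v to dom v is not continuous at any y ∈ dom v. -/
open MeasureTheory

/-- Lebesgue measure on `[0,1]`. -/
noncomputable def mu : Measure ℝ := volume.restrict (Set.Icc (0 : ℝ) 1)

/-- Feasibility of `(x, r)` for the primal problem with right-hand side `y`:
`(x, r) ∈ P = L²₊ × ℝ₊` and `A(x,r) − y ∈ Q = L²₊`, where
`A(x,r)(t) = ∫_t^1 x(s) ds + r`. -/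
def Feas (y : ℝ → ℝ) (p : (ℝ → ℝ) × ℝ) : Prop :=
  MemLp p.1 2 mu ∧ (∀ᵐ t ∂mu, 0 ≤ p.1 t) ∧ 0 ≤ p.2 ∧
  ∀ᵐ t ∂mu, y t ≤ (∫ s in Set.Ioc t 1, p.1 s ∂mu) + p.2

/-- The cost `c*(x,r) = ∫_0^1 t x(t) dt + α r`. -/
noncomputable def cost (α : ℝ) (p : (ℝ → ℝ) × ℝ) : ℝ :=
  (∫ t, t * p.1 t ∂mu) + α * p.2

/-- Kretschmer's value function on `Y = L²[0,1]`. -/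
noncomputable def val (α : ℝ) (y : Lp ℝ 2 mu) : EReal :=
  ⨅ (p : (ℝ → ℝ) × ℝ) (_ : Feas (⇑y) p), ((cost α p : ℝ) : EReal)

/-
A right-hand side `y` is feasible iff it is essentially bounded above: `(0, max C 0)` is feasible
when `y ≤ C`, and feasibility forces `y ≤ ∫ x + r`. Raising `y` to `max y g` on a set of small
measure costs little in `L²`, by absolute continuity of the integral of `((g - y)⁺)²`. With
`g = t ^ (-1/4)` near `0` this leaves `dom v`. With a constant `g = b` near `1` it stays in
`dom v`, but every feasible `(x, r)` then has `b ≤ ∫_{t₀}^1 x + r ≤ 2 ∫ t x(t) dt + r` for some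
`t₀ ≥ 1/2`, so its cost is at least `min α (1/2) * b / 2`.
-/

open Set Filter Topology

section RaiseOnSmallSets

variable {X : Type*} [MeasurableSpace X] {μ : Measure X} {p : ENNReal} [Fact (1 ≤ p)]

theorem exists_mem_ball_ge_on_small_sets (hp : p ≠ ⊤) (y : Lp ℝ p μ) {g : X → ℝ}
    (hg : MemLp g p μ) {ρ : ℝ} (hρ : 0 < ρ) :
    ∃ δ > 0, ∀ S, MeasurableSet S → μ S ≤ ENNReal.ofReal δ →
      ∃ y' ∈ Metric.ball y ρ,
        (∀ᵐ t ∂μ, t ∈ S → g t ≤ y' t) ∧ ∀ᵐ t ∂μ, y' t ≤ max (y t) (g t) := by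
  set f : X → ℝ := fun t => max (g t - y t) 0
  have hf : MemLp f p μ := (hg.sub (Lp.memLp y)).pos_part
  obtain ⟨δ, hδ, hsmall⟩ := hf.eLpNorm_indicator_le Fact.out hp (half_pos hρ)
  refine ⟨δ, hδ, fun S hS hSδ => ?_⟩
  have hfS : MemLp (S.indicator f) p μ := hf.indicator hS
  have hy' : ∀ᵐ t ∂μ, (y + hfS.toLp _) t = y t + S.indicator f t := by
    filter_upwards [Lp.coeFn_add y (hfS.toLp _), hfS.coeFn_toLp] with t hadd hind
    rw [hadd, Pi.add_apply, hind]
  refine ⟨y + hfS.toLp _, ?_, ?_, ?_⟩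
  · rw [Metric.mem_ball, dist_eq_norm, add_sub_cancel_left, Lp.norm_toLp]
    calc (eLpNorm (S.indicator f) p μ).toReal ≤ ρ / 2 :=
          ENNReal.toReal_le_of_le_ofReal (half_pos hρ).le (hsmall S hS hSδ)
      _ < ρ := half_lt_self hρ
  · filter_upwards [hy'] with t ht htS
    rw [ht, indicator_of_mem htS]
    linarith [le_max_left (g t - y t) 0]
  · filter_upwards [hy'] with t ht
    rw [ht]
    by_cases htS : t ∈ S
    · rw [indicator_of_mem htS, add_max, add_sub_cancel, add_zero, max_comm]
    · rw [indicator_of_notMem htS, add_zero]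
      exact le_max_left _ _

end RaiseOnSmallSets

theorem not_continuousWithinAt_of_forall_ball_exists_gt {X : Type*} [PseudoMetricSpace X]
    {f : X → EReal} {s : Set X} {x : X} (hx : f x < ⊤)
    (h : ∀ ρ > 0, ∀ M : ℝ, ∃ x' ∈ Metric.ball x ρ, x' ∈ s ∧ (M : EReal) < f x') :
    ¬ ContinuousWithinAt f s x := by
  intro hcont
  obtain ⟨M, hxM, -⟩ := EReal.lt_iff_exists_real_btwn.1 hx
  obtain ⟨ρ, hρ, hball⟩ := Metric.mem_nhdsWithin_iff.1 (hcont (Iio_mem_nhds hxM))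
  obtain ⟨x', hx'ρ, hx's, hMx'⟩ := h ρ hρ M
  exact (hball ⟨hx'ρ, hx's⟩ : f x' < M).not_gt hMx'

instance : IsFiniteMeasure mu := by
  rw [mu]; infer_instance

lemma ae_mem_Icc_mu : ∀ᵐ t ∂mu, t ∈ Icc (0 : ℝ) 1 :=
  ae_restrict_mem measurableSet_Icc

lemma mu_Ioc {a b : ℝ} (ha : 0 ≤ a) (hb : b ≤ 1) : mu (Ioc a b) = ENNReal.ofReal (b - a) := by
  rw [mu, Measure.restrict_apply measurableSet_Ioc,
    inter_eq_left.2 (Ioc_subset_Icc_self.trans (Icc_subset_Icc ha hb)), Real.volume_Ioc]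

lemma memLp_rpow {s : ℝ} (hs : -1 / 2 < s) : MemLp (fun t : ℝ => t ^ s) 2 mu := by
  have hmeas : AEStronglyMeasurable (fun t : ℝ => t ^ s) mu :=
    (measurable_id.pow_const s).aestronglyMeasurable
  rw [memLp_two_iff_integrable_sq hmeas]
  have hint : IntegrableOn (fun t : ℝ => t ^ (2 * s)) (Icc 0 1) := by
    rw [integrableOn_Icc_iff_integrableOn_Ioo,
      intervalIntegral.integrableOn_Ioo_rpow_iff zero_lt_one]
    linarith
  refine hint.congr_fun_ae ?_
  filter_upwards [ae_mem_Icc_mu] with t ht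
  rw [mul_comm, Real.rpow_mul ht.1, Real.rpow_two]

lemma not_ae_rpow_le {s : ℝ} (hs : s < 0) {ε : ℝ} (hε : 0 < ε) (C : ℝ) :
    ¬ ∀ᵐ t ∂mu, t ∈ Ioc 0 ε → t ^ s ≤ C := by
  intro hC
  obtain ⟨η, hη, hlarge⟩ := mem_nhdsGT_iff_exists_Ioo_subset.1
    ((tendsto_rpow_neg_nhdsGT_zero hs).eventually_gt_atTop C)
  have hη : 0 < η := hη
  obtain ⟨η', hη'0, hη'ε, hη'1, hη'η⟩ : ∃ η', 0 < η' ∧ η' ≤ ε ∧ η' ≤ 1 ∧ η' < η :=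
    ⟨min (min ε 1) (η / 2), by positivity, (min_le_left _ _).trans (min_le_left _ _),
      (min_le_left _ _).trans (min_le_right _ _), (min_le_right _ _).trans_lt (half_lt_self hη)⟩
  have hnull : mu (Ioc 0 η') ≠ 0 := by
    rw [mu_Ioc le_rfl hη'1]; simpa using hη'0
  obtain ⟨t, ⟨ht0, htη'⟩, htC⟩ := Measure.exists_mem_of_measure_ne_zero_of_ae hnull
    (ae_restrict_of_ae hC)
  exact (hlarge ⟨ht0, htη'.trans_lt hη'η⟩ : C < t ^ s).not_ge (htC ⟨ht0, htη'.trans hη'ε⟩)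

lemma integrable_id_mul {x : ℝ → ℝ} (hx : Integrable x mu) :
    Integrable (fun s => s * x s) mu := by
  refine hx.bdd_mul (c := 1) aestronglyMeasurable_id ?_
  filter_upwards [ae_mem_Icc_mu] with t ht
  rw [Real.norm_eq_abs, abs_le]
  constructor <;> linarith [ht.1, ht.2]

lemma integral_id_mul_nonneg {x : ℝ → ℝ} (hx0 : ∀ᵐ t ∂mu, 0 ≤ x t) :
    0 ≤ ∫ t, t * x t ∂mu :=
  integral_nonneg_of_ae <| by
    filter_upwards [ae_mem_Icc_mu, hx0] with t ht h0
    exact mul_nonneg ht.1 h0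

lemma setIntegral_Ioc_le_two_mul_integral_id_mul {x : ℝ → ℝ} (hx : Integrable x mu)
    (hx0 : ∀ᵐ t ∂mu, 0 ≤ x t) {t₀ : ℝ} (ht₀ : 1 / 2 ≤ t₀) :
    ∫ s in Ioc t₀ 1, x s ∂mu ≤ 2 * ∫ s, s * x s ∂mu := by
  have hmul := integrable_id_mul hx
  calc ∫ s in Ioc t₀ 1, x s ∂mu ≤ ∫ s in Ioc t₀ 1, 2 * (s * x s) ∂mu := by
        refine integral_mono_ae hx.integrableOn (hmul.const_mul 2).integrableOn ?_
        filter_upwards [ae_restrict_mem measurableSet_Ioc, ae_restrict_of_ae hx0] with s hs h0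
        nlinarith [hs.1]
    _ = 2 * ∫ s in Ioc t₀ 1, s * x s ∂mu := integral_const_mul _ _
    _ ≤ 2 * ∫ s, s * x s ∂mu := by
        refine mul_le_mul_of_nonneg_left (setIntegral_le_integral hmul ?_) zero_le_two
        filter_upwards [ae_mem_Icc_mu, hx0] with s hs h0
        exact mul_nonneg hs.1 h0

lemma Feas.ae_le_integral_add {y : ℝ → ℝ} {p : (ℝ → ℝ) × ℝ} (hp : Feas y p) :
    ∀ᵐ t ∂mu, y t ≤ (∫ s, p.1 s ∂mu) + p.2 := by
  obtain ⟨hx, hx0, -, hfeas⟩ := hp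
  filter_upwards [hfeas] with t ht
  exact ht.trans (add_le_add_left (setIntegral_le_integral (hx.integrable one_le_two) hx0) _)

lemma val_lt_top_iff {α : ℝ} {y : Lp ℝ 2 mu} : val α y < ⊤ ↔ ∃ C, ∀ᵐ t ∂mu, y t ≤ C := by
  constructor
  · intro h
    obtain ⟨p, hp, -⟩ : ∃ p, ∃ _ : Feas y p, ((cost α p : ℝ) : EReal) < ⊤ := by
      simpa only [val, iInf_lt_iff] using h
    exact ⟨_, hp.ae_le_integral_add⟩
  · rintro ⟨C, hC⟩
    have hfeas : Feas y (fun _ => 0, max C 0) := by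
      refine ⟨memLp_const 0, ae_of_all _ fun _ => le_rfl, le_max_right _ _, ?_⟩
      filter_upwards [hC] with t ht
      simpa using ht.trans (le_max_left C 0)
    exact (iInf₂_le _ hfeas).trans_lt (EReal.coe_lt_top _)

lemma min_mul_le_two_mul_cost {α : ℝ} (hα : 0 ≤ α) {y : ℝ → ℝ} {p : (ℝ → ℝ) × ℝ}
    (hp : Feas y p) {t₀ b : ℝ} (ht₀ : 1 / 2 ≤ t₀) (hb : b ≤ y t₀)
    (ht₀feas : y t₀ ≤ (∫ s in Ioc t₀ 1, p.1 s ∂mu) + p.2) :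
    min α (1 / 2) * b ≤ 2 * cost α p := by
  obtain ⟨hx, hx0, hr, -⟩ := hp
  have hJ := setIntegral_Ioc_le_two_mul_integral_id_mul (hx.integrable one_le_two) hx0 ht₀
  have hI := integral_id_mul_nonneg hx0
  have hmα : min α (1 / 2) ≤ α := min_le_left _ _
  have hm2 : min α (1 / 2) ≤ 1 / 2 := min_le_right _ _
  have hm0 : 0 ≤ min α (1 / 2) := le_min hα (by norm_num)
  rw [cost]
  rcases le_total p.2 (b / 2) with hrb | hbr
  · nlinarith [mul_le_mul_of_nonneg_left hrb (by linarith : 0 ≤ 1 - 2 * min α (1 / 2)),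
      mul_le_mul_of_nonneg_right hmα hr]
  · nlinarith [mul_le_mul_of_nonneg_left hbr hm0, mul_le_mul_of_nonneg_right hmα hr]

lemma le_val_of_ae_le {α : ℝ} (hα : 0 ≤ α) {y : Lp ℝ 2 mu} {S : Set ℝ} (hS : mu S ≠ 0)
    (hS2 : S ⊆ Ici (1 / 2)) {b : ℝ} (hb : ∀ᵐ t ∂mu, t ∈ S → b ≤ y t) :
    ((min α (1 / 2) * b / 2 : ℝ) : EReal) ≤ val α y :=
  le_iInf₂ fun p hp => by
    obtain ⟨t₀, ht₀S, hbt₀, ht₀⟩ :=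
      Measure.exists_mem_of_measure_ne_zero_of_ae hS (ae_restrict_of_ae (hb.and hp.2.2.2))
    have := min_mul_le_two_mul_cost hα hp (hS2 ht₀S) (hbt₀ ht₀S) ht₀
    exact EReal.coe_le_coe_iff.2 (by linarith)

lemma exists_mem_ball_val_gt {α : ℝ} (hα : 0 < α) {y : Lp ℝ 2 mu} (hy : val α y < ⊤)
    {ρ : ℝ} (hρ : 0 < ρ) (M : ℝ) :
    ∃ y' ∈ Metric.ball y ρ, val α y' < ⊤ ∧ (M : EReal) < val α y' := by
  obtain ⟨C, hC⟩ := val_lt_top_iff.1 hy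
  have hm : 0 < min α (1 / 2) := lt_min hα (by norm_num)
  obtain ⟨b, hb⟩ : ∃ b, min α (1 / 2) * b / 2 = |M| + 1 :=
    ⟨2 * (|M| + 1) / min α (1 / 2), by field_simp⟩
  obtain ⟨δ, hδ, hraise⟩ :=
    exists_mem_ball_ge_on_small_sets ENNReal.ofNat_ne_top y (memLp_const b) hρ
  set u := max (1 / 2) (1 - δ)
  have hu0 : 0 ≤ u := le_max_of_le_left (by norm_num)
  have hu1 : u < 1 := max_lt (by norm_num) (by linarith)
  obtain ⟨y', hy'ρ, hy'S, hy'le⟩ := hraise (Ioc u 1) measurableSet_Ioc <| by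
    rw [mu_Ioc hu0 le_rfl]
    exact ENNReal.ofReal_le_ofReal (by linarith [le_max_right (1 / 2) (1 - δ)])
  refine ⟨y', hy'ρ, val_lt_top_iff.2 ⟨max C b, ?_⟩, ?_⟩
  · filter_upwards [hy'le, hC] with t h1 h2
    exact h1.trans (max_le_max h2 le_rfl)
  · calc (M : EReal) < ((min α (1 / 2) * b / 2 : ℝ) : EReal) :=
          EReal.coe_lt_coe_iff.2 (by linarith [le_abs_self M])
      _ ≤ val α y' := by
          refine le_val_of_ae_le hα.le ?_ (fun t ht => (le_max_left _ _).trans ht.1.le) hy'S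
          rw [mu_Ioc hu0 le_rfl]
          simpa using hu1

lemma exists_mem_ball_val_eq_top (α : ℝ) (y : Lp ℝ 2 mu) {ρ : ℝ} (hρ : 0 < ρ) :
    ∃ y'' ∈ Metric.ball y ρ, val α y'' = ⊤ := by
  obtain ⟨δ, hδ, hraise⟩ := exists_mem_ball_ge_on_small_sets ENNReal.ofNat_ne_top y
    (memLp_rpow (s := -1 / 4) (by norm_num)) hρ
  obtain ⟨y'', hy''ρ, hy''S, -⟩ := hraise (Ioc 0 (min δ 1)) measurableSet_Ioc <| by
    rw [mu_Ioc le_rfl (min_le_right _ _), sub_zero]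
    exact ENNReal.ofReal_le_ofReal (min_le_left _ _)
  refine ⟨y'', hy''ρ, ?_⟩
  by_contra hfin
  obtain ⟨C, hC⟩ := val_lt_top_iff.1 (lt_top_iff_ne_top.2 hfin)
  refine not_ae_rpow_le (by norm_num : (-1 / 4 : ℝ) < 0) (lt_min hδ one_pos) C ?_
  filter_upwards [hy''S, hC] with t h1 h2 ht
  exact (h1 ht).trans h2

/-- In Kretschmer's setting with `α > 0`, for every `y ∈ dom v` and every
`ρ > 0` the value function is unbounded above on `B(y,ρ) ∩ dom v` and `B(y,ρ)` meets
the complement of `dom v`; consequently `dom v` has empty interior and the restriction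
of `v` to `dom v` is continuous at no point of `dom v`. -/
theorem stmt16 (α : ℝ) (hα : 0 < α) :
    (∀ y : Lp ℝ 2 mu, val α y < ⊤ → ∀ ρ : ℝ, 0 < ρ →
      (∀ M : ℝ, ∃ y' : Lp ℝ 2 mu, y' ∈ Metric.ball y ρ ∧ val α y' < ⊤ ∧
        (M : EReal) < val α y') ∧
      (∃ y'' : Lp ℝ 2 mu, y'' ∈ Metric.ball y ρ ∧ val α y'' = ⊤)) ∧
    interior {y : Lp ℝ 2 mu | val α y < ⊤} = ∅ ∧
    (∀ y : Lp ℝ 2 mu, val α y < ⊤ →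
      ¬ ContinuousWithinAt (val α) {y' : Lp ℝ 2 mu | val α y' < ⊤} y) := by
  refine ⟨fun y hy ρ hρ => ⟨exists_mem_ball_val_gt hα hy hρ, exists_mem_ball_val_eq_top α y hρ⟩,
    ?_, fun y hy => not_continuousWithinAt_of_forall_ball_exists_gt hy
      fun ρ hρ => exists_mem_ball_val_gt hα hy hρ⟩
  rw [interior_eq_empty_iff_dense_compl, Metric.dense_iff]
  intro y ρ hρ
  obtain ⟨y'', hy''ρ, htop⟩ := exists_mem_ball_val_eq_top α y hρ
  exact ⟨y'', hy''ρ, by simp [htop]⟩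
end
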